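/- Let f be a nonzero polynomial in m variables of total degree d over a finite field F with d < |F|. If x_1, …, x_m are chosen independently and uniformly at random from F, then the probability that f(x_1, …, x_m) ≠ 0 is at least 1 − d/|F|. -/

import Mathlib

open scoped Classical

open MvPolynomial Finset in
lemma sz_key : ∀ (n : ℕ) (F : Type*) [Field F] [Fintype F]
    (f : MvPolynomial (Fin n) F), f ≠ 0 →
    (Finset.univ.filter (fun x : Fin n → F => MvPolynomial.eval x f = 0)).card
       * Fintype.card F ≤ f.totalDegree * (Fintype.card F) ^ n := by
  intro n
  induction n with
  | zero =>
    intro F _ _ f hf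
    obtain ⟨c, rfl⟩ := MvPolynomial.C_surjective (Fin 0) f
    have hc : c ≠ 0 := fun h => hf (by simp [h])
    have h0 : (Finset.univ.filter (fun x : Fin 0 → F => MvPolynomial.eval x (C c) = 0)) = ∅ :=
      Finset.filter_eq_empty_iff.mpr (fun x _ => by simpa using hc)
    simp [h0, hc]
  | succ n ih =>
    intro F _ _ f hf
    set q := Fintype.card F with hq
    set p := MvPolynomial.finSuccEquiv F n f with hp
    have hp0 : p ≠ 0 := by
      simp only [hp, ne_eq, EmbeddingLike.map_eq_zero_iff]
      exact hf
    set k := p.natDegree with hk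
    set g := p.leadingCoeff with hg
    have hg0 : g ≠ 0 := Polynomial.leadingCoeff_ne_zero.mpr hp0
    -- split the count
    have hsplit : (Finset.univ.filter
        (fun x : Fin (n+1) → F => MvPolynomial.eval x f = 0)).card =
        ∑ s : Fin n → F, (Finset.univ.filter
          (fun y : F => MvPolynomial.eval (Fin.cons y s) f = 0)).card := by
      rw [Finset.card_filter]
      rw [← Fintype.sum_equiv (Fin.consEquiv (fun _ : Fin (n+1) => F))
        (fun ys : F × (Fin n → F) =>
          if MvPolynomial.eval (Fin.cons ys.1 ys.2) f = 0 then 1 else 0)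
        (fun x => if MvPolynomial.eval x f = 0 then 1 else 0)
        (fun ys => rfl)]
      rw [Fintype.sum_prod_type]
      rw [Finset.sum_comm]
      exact Finset.sum_congr rfl fun s _ => (Finset.card_filter _ _).symm
    -- per-tail bound
    have hbound : ∀ s : Fin n → F, MvPolynomial.eval s g ≠ 0 →
        (Finset.univ.filter
          (fun y : F => MvPolynomial.eval (Fin.cons y s) f = 0)).card ≤ k := by
      intro s hs
      set ps := p.map (MvPolynomial.eval s) with hps
      have hps0 : ps ≠ 0 := by
        intro h
        apply hs
        have := Polynomial.coeff_map (MvPolynomial.eval s) k (p := p)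
        rw [← hps, h] at this
        rw [Polynomial.coeff_zero] at this
        exact this.symm
      have hsub : (Finset.univ.filter
          (fun y : F => MvPolynomial.eval (Fin.cons y s) f = 0)) ⊆ ps.roots.toFinset := by
        intro y hy
        simp only [Finset.mem_filter] at hy
        rw [MvPolynomial.eval_eq_eval_mv_eval'] at hy
        rw [← hp, ← hps] at hy
        simp [Polynomial.mem_roots, hps0, Polynomial.IsRoot, hy.2, ← hps]
      calc (Finset.univ.filter
          (fun y : F => MvPolynomial.eval (Fin.cons y s) f = 0)).card
          ≤ ps.roots.toFinset.card := Finset.card_le_card hsub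
        _ ≤ Multiset.card ps.roots := ps.roots.toFinset_card_le
        _ ≤ ps.natDegree := Polynomial.card_roots' ps
        _ ≤ k := Polynomial.natDegree_map_le
    -- sum bound
    set Zg := (Finset.univ.filter (fun s : Fin n → F => MvPolynomial.eval s g = 0)) with hZg
    have hsum : ∑ s : Fin n → F, (Finset.univ.filter
          (fun y : F => MvPolynomial.eval (Fin.cons y s) f = 0)).card
        ≤ Zg.card * q + k * q ^ n := by
      calc ∑ s : Fin n → F, (Finset.univ.filter
            (fun y : F => MvPolynomial.eval (Fin.cons y s) f = 0)).card
          = ∑ s ∈ Zg, (Finset.univ.filter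
              (fun y : F => MvPolynomial.eval (Fin.cons y s) f = 0)).card
            + ∑ s ∈ Zgᶜ, (Finset.univ.filter
              (fun y : F => MvPolynomial.eval (Fin.cons y s) f = 0)).card :=
            (Finset.sum_add_sum_compl Zg _).symm
        _ ≤ ∑ _s ∈ Zg, q + ∑ _s ∈ Zgᶜ, k := by
            apply add_le_add
            · apply Finset.sum_le_sum
              intro s _
              simpa [hq] using Finset.card_le_card
                (Finset.subset_univ (Finset.univ.filter
                  (fun y : F => MvPolynomial.eval (Fin.cons y s) f = 0)))
            · apply Finset.sum_le_sum
              intro s hs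
              simp only [hZg, Finset.mem_compl, Finset.mem_filter, Finset.mem_univ,
                true_and] at hs
              exact hbound s hs
        _ ≤ Zg.card * q + k * q ^ n := by
            simp only [Finset.sum_const, smul_eq_mul]
            apply add_le_add_right
            rw [mul_comm]
            apply Nat.mul_le_mul_left
            simpa [hq] using Finset.card_le_card (Finset.subset_univ Zgᶜ)
    -- degree bound
    have hdeg : g.totalDegree + k ≤ f.totalDegree := by
      exact MvPolynomial.totalDegree_coeff_finSuccEquiv_add_le f k
        (Polynomial.leadingCoeff_ne_zero.mpr hp0)
    have hih : Zg.card * q ≤ g.totalDegree * q ^ n := ih F g hg0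
    calc (Finset.univ.filter
          (fun x : Fin (n+1) → F => MvPolynomial.eval x f = 0)).card * q
        ≤ (Zg.card * q + k * q ^ n) * q := by
          rw [hsplit]; exact Nat.mul_le_mul_right q hsum
      _ = Zg.card * q * q + k * q ^ (n+1) := by ring
      _ ≤ g.totalDegree * q ^ n * q + k * q ^ (n+1) :=
          add_le_add_left (Nat.mul_le_mul_right q hih) _
      _ = (g.totalDegree + k) * q ^ (n+1) := by ring
      _ ≤ f.totalDegree * q ^ (n+1) := Nat.mul_le_mul_right _ hdeg

/-- DeMillo–Lipton–Schwartz–Zippel: if f is a nonzero m-variate polynomial of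
total degree d over a finite field F with d < |F|, and x₁, …, x_m are chosen
uniformly at random from F, then Pr(f(x₁,…,x_m) ≠ 0) ≥ 1 − d/|F| (the
probability expressed as a fraction of the |F|^m sample points). -/
theorem stmt_14 {F : Type*} [Field F] [Fintype F] (m : ℕ)
    (f : MvPolynomial (Fin m) F) (hf : f ≠ 0) (d : ℕ)
    (hd : f.totalDegree = d) (hdF : d < Fintype.card F) :
    (1 : ℝ) - (d : ℝ) / (Fintype.card F : ℝ) ≤
      ((Finset.univ.filter
          (fun x : Fin m → F => MvPolynomial.eval x f ≠ 0)).card : ℝ) /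
        ((Fintype.card F : ℝ) ^ m) := by
  set q := Fintype.card F with hq
  have hq0 : 0 < q := Fintype.card_pos
  have hqR : (0 : ℝ) < q := by exact_mod_cast hq0
  set Z := (Finset.univ.filter (fun x : Fin m → F => MvPolynomial.eval x f = 0)) with hZ
  set N := (Finset.univ.filter (fun x : Fin m → F => MvPolynomial.eval x f ≠ 0)) with hN
  have hZN : Z.card + N.card = q ^ m := by
    rw [hZ, hN]
    rw [Finset.card_filter_add_card_filter_not]
    simp [hq, Finset.card_univ]
  have hkey : Z.card * q ≤ d * q ^ m := by
    have := sz_key m F f hf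
    rwa [hd] at this
  have hkeyR : (Z.card : ℝ) * q ≤ d * q ^ m := by exact_mod_cast hkey
  have hZNR : (Z.card : ℝ) + N.card = (q : ℝ) ^ m := by exact_mod_cast hZN
  rw [le_div_iff₀ (by positivity)]
  have hdq : (d : ℝ) / q * q = d := div_mul_cancel₀ _ (ne_of_gt hqR)
  nlinarith [pow_pos hqR m, hkeyR, hZNR, hqR]
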